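/- arXiv:2304.07603 — 11 statements merged into one kernel-verified Lean document; each statement's English description precedes it below -/
import Mathlib

section
/- Let w_l, w_r ∈ F(A) with w_l right-positive and w_r positive. Then the product w_l·w_r is positive if and only if w_l is positive. -/
/-!
The last letter of a right-positive reduced word is positive (it is a suffix of nonnegative
degree), and the first letter of a positive word is positive, so nothing cancels at the junction:
the reduced word of `wl * wr` is the concatenation of those of `wl` and `wr`.
-/

namespace PositiveWords

variable {A : Type*} [DecidableEq A]

/-- The degree of a list of letters: +1 for each positive letter, −1 for each inverse letter. -/
def degree (t : List (A × Bool)) : ℤ :=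
  (t.map fun p => if p.2 then (1 : ℤ) else -1).sum

/-- A positive element of the free group: every letter of its reduced word is positive. -/
def Positive (w : FreeGroup A) : Prop :=
  ∀ p ∈ w.toWord, p.2 = true

/-- A right-positive element: every suffix of its reduced word has nonnegative degree. -/
def RightPositive (w : FreeGroup A) : Prop :=
  ∀ s t : List (A × Bool), w.toWord = s ++ t → 0 ≤ degree t

open FreeGroup

theorem toWord_mul_of_getLast?_head? {x y : FreeGroup A}
    (h : ∀ a ∈ x.toWord.getLast?, ∀ b ∈ y.toWord.head?, a.1 = b.1 → a.2 = b.2) :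
    (x * y).toWord = x.toWord ++ y.toWord := by
  rw [toWord_mul]
  exact IsReduced.reduce_eq (List.isChain_append.mpr ⟨isReduced_toWord, isReduced_toWord, h⟩)

theorem RightPositive.getLast?_snd {w : FreeGroup A} (hw : RightPositive w)
    {p : A × Bool} (hp : p ∈ w.toWord.getLast?) : p.2 = true := by
  have hsuffix := hw w.toWord.dropLast [p] (List.dropLast_append_getLast? p hp).symm
  by_contra hneg
  simp [degree, hneg] at hsuffix

theorem Positive.head?_snd {w : FreeGroup A} (hw : Positive w)
    {p : A × Bool} (hp : p ∈ w.toWord.head?) : p.2 = true :=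
  hw p (List.mem_of_mem_head? hp)

theorem toWord_mul_of_rightPositive_of_positive {wl wr : FreeGroup A}
    (hl : RightPositive wl) (hr : Positive wr) :
    (wl * wr).toWord = wl.toWord ++ wr.toWord :=
  toWord_mul_of_getLast?_head? fun _ ha _ hb _ =>
    (hl.getLast?_snd ha).trans (hr.head?_snd hb).symm

/-- If `wl` is right-positive and `wr` is positive, then `wl * wr` is positive iff `wl` is. -/
theorem positive_mul_iff (wl wr : FreeGroup A)
    (hl : RightPositive wl) (hr : Positive wr) :
    Positive (wl * wr) ↔ Positive wl := by
  unfold Positive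
  rw [toWord_mul_of_rightPositive_of_positive hl hr, List.forall_mem_append]
  exact and_iff_left hr

end PositiveWords
end

section
/- Let w₁, w₂ ∈ F(A) be right-positive and v₁, v₂ ∈ F(A) be positive, and suppose w₁·v₁ = w₂·v₂ in F(A). Then there exist a positive element z ∈ F(A) and δ ∈ {1, −1} such that w₁⁻¹·w₂ = z^δ. -/
namespace PositiveWords

variable {A : Type*} [DecidableEq A]

lemma step_decomp {L N : List (A × Bool)} (h : FreeGroup.Red.Step L N) :
    ∃ (L₁ L₂ : List (A × Bool)) (x : A) (b : Bool),
      L = L₁ ++ (x, b) :: (x, !b) :: L₂ ∧ N = L₁ ++ L₂ := by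
  cases h; exact ⟨_, _, _, _, rfl, rfl⟩

lemma step_mul_of (w : FreeGroup A) (a : A) :
    (∃ L', w.toWord = L' ++ [(a, false)] ∧ (w * FreeGroup.of a).toWord = L') ∨
    (w * FreeGroup.of a).toWord = w.toWord ++ [(a, true)] := by
  have hofa : FreeGroup.of a = FreeGroup.mk [(a, true)] := by
    rw [← FreeGroup.mk_toWord (x := FreeGroup.of a), FreeGroup.toWord_of]
  have hw : (w * FreeGroup.of a).toWord
      = FreeGroup.reduce (w.toWord ++ [(a, true)]) := by
    conv_lhs => rw [← FreeGroup.mk_toWord (x := w), hofa, FreeGroup.mul_mk]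
    rw [FreeGroup.toWord_mk]
  by_cases hc : ∃ L', w.toWord = L' ++ [(a, false)]
  · obtain ⟨L', hL⟩ := hc
    left
    have hred : FreeGroup.reduce L' = L' := by
      have h1 : FreeGroup.Red w.toWord (FreeGroup.reduce L' ++ [(a, false)]) := by
        rw [hL]
        exact FreeGroup.Red.append_append FreeGroup.reduce.red FreeGroup.Red.refl
      have h2 : FreeGroup.reduce w.toWord = FreeGroup.reduce L' ++ [(a, false)] :=
        FreeGroup.reduce.min (by rw [FreeGroup.reduce_toWord]; exact h1)
      rw [FreeGroup.reduce_toWord, hL] at h2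
      exact (List.append_inj_left' h2 rfl).symm
    refine ⟨L', hL, ?_⟩
    rw [hw, hL]
    have hstep : FreeGroup.Red.Step (L' ++ (a, false) :: (a, !false) :: [])
        (L' ++ []) := FreeGroup.Red.Step.not
    have : FreeGroup.reduce (L' ++ (a, false) :: (a, true) :: [])
        = FreeGroup.reduce (L' ++ []) := FreeGroup.reduce.Step.eq (by simpa using hstep)
    simpa [hred] using this
  · right
    rw [hw]
    rcases Relation.ReflTransGen.cases_head
      (FreeGroup.reduce.red (L := w.toWord ++ [(a, true)])) with heq | ⟨N, hstep, _⟩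
    · exact heq.symm
    · exfalso
      obtain ⟨L₁, L₂, x, b, hM, _⟩ := step_decomp hstep
      rcases List.eq_nil_or_concat L₂ with rfl | ⟨K, y, rfl⟩
      · have hM' : w.toWord ++ [(a, true)] = (L₁ ++ [(x, b)]) ++ [(x, !b)] := by
          simpa using hM
        obtain ⟨h1, h2⟩ := List.append_inj' hM' rfl
        have hx : a = x ∧ true = !b := by
          simpa [Prod.ext_iff] using h2
        obtain ⟨rfl, hb⟩ := hx
        have hb' : b = false := by
          cases b
          · rfl
          · simp at hb
        exact hc ⟨L₁, by rw [h1, hb']⟩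
      · have hM' : w.toWord ++ [(a, true)] = (L₁ ++ (x, b) :: (x, !b) :: K) ++ [y] := by
          rw [hM]; simp
        have h1 : w.toWord = L₁ ++ (x, b) :: (x, !b) :: K :=
          (List.append_inj' hM' rfl).1
        exact FreeGroup.reduce.not (p := False) (L₁ := w.toWord) (L₂ := L₁)
          (L₃ := K) (x := x) (b := b)
          (by rw [FreeGroup.reduce_toWord]; exact h1)

lemma mul_posList (l : List A) (w : FreeGroup A) :
    ∃ s t p : List (A × Bool), w.toWord = s ++ t ∧
      (w * FreeGroup.mk (l.map fun a => (a, true))).toWord = s ++ p ∧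
      (∀ x ∈ t, x.2 = false) ∧ (∀ x ∈ p, x.2 = true) := by
  induction l generalizing w with
  | nil =>
    refine ⟨w.toWord, [], [], by simp, ?_, by simp, by simp⟩
    have : FreeGroup.mk ([] : List (A × Bool)) = 1 := FreeGroup.one_eq_mk.symm
    simp [this]
  | cons a l ih =>
    have hsplit : FreeGroup.mk (((a :: l)).map fun a => (a, true))
        = FreeGroup.of a * FreeGroup.mk (l.map fun a => (a, true)) := by
      have hofa : FreeGroup.of a = FreeGroup.mk [(a, true)] := by
        rw [← FreeGroup.mk_toWord (x := FreeGroup.of a), FreeGroup.toWord_of]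
      rw [hofa, FreeGroup.mul_mk]; rfl
    rw [hsplit, ← mul_assoc]
    obtain ⟨s, t, p, h1, h2, h3, h4⟩ := ih (w * FreeGroup.of a)
    rcases step_mul_of w a with ⟨L', hwL, hwa⟩ | hwa
    · refine ⟨s, t ++ [(a, false)], p, ?_, h2, ?_, h4⟩
      · rw [hwL, hwa.symm.trans h1]; simp
      · intro x hx
        rcases List.mem_append.1 hx with h | h
        · exact h3 x h
        · simp at h; rw [h]
    · have ht : t = [] := by
        rcases List.eq_nil_or_concat t with h | ⟨t', y, rfl⟩
        · exact h
        · exfalso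
          have he : w.toWord ++ [(a, true)] = (s ++ t') ++ [y] := by
            rw [← hwa, h1]; simp
          have hy : (a, true) = y :=
            List.singleton_inj.mp (List.append_inj' he rfl).2
          have := h3 y (by simp)
          rw [← hy] at this; simp at this
      subst ht
      have hs : s = w.toWord ++ [(a, true)] := by
        rw [← hwa, h1]; simp
      refine ⟨w.toWord, [], (a, true) :: p, by simp, ?_, by simp, ?_⟩
      · rw [h2, hs]; simp
      · intro x hx
        rcases List.mem_cons.1 hx with h | h
        · rw [h]
        · exact h4 x h

lemma degree_allFalse {t : List (A × Bool)} (h : ∀ x ∈ t, x.2 = false) :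
    degree t = -(t.length : ℤ) := by
  induction t with
  | nil => simp [degree]
  | cons x t ih =>
    have hx : x.2 = false := h x (by simp)
    have ht : ∀ y ∈ t, y.2 = false := fun y hy => h y (List.mem_cons_of_mem _ hy)
    have hih := ih ht
    simp only [degree, List.map_cons, List.sum_cons, hx, if_false, List.length_cons]
    simp only [degree] at hih
    rw [hih]; push_cast; ring

lemma rightPos_mul_pos {w v : FreeGroup A} (hw : RightPositive w) (hv : Positive v) :
    ∃ p : List (A × Bool), (w * v).toWord = w.toWord ++ p ∧ ∀ x ∈ p, x.2 = true := by
  have hv' : FreeGroup.mk ((v.toWord.map Prod.fst).map fun a => (a, true)) = v := by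
    have : (v.toWord.map Prod.fst).map (fun a => (a, true)) = v.toWord := by
      rw [List.map_map]
      conv_rhs => rw [← List.map_id v.toWord]
      refine List.map_congr_left fun x hx => ?_
      have := hv x hx
      cases x with
      | mk a b => simpa using this.symm
    rw [this, FreeGroup.mk_toWord]
  obtain ⟨s, t, p, h1, h2, h3, h4⟩ := mul_posList (v.toWord.map Prod.fst) w
  rw [hv'] at h2
  have hdeg := hw s t h1
  rw [degree_allFalse h3] at hdeg
  have ht : t = [] := by
    have : (t.length : ℤ) = 0 := le_antisymm (by omega) (by positivity)
    exact List.eq_nil_of_length_eq_zero (by exact_mod_cast this)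
  subst ht
  simp at h1
  exact ⟨p, by rw [h2, h1], h4⟩

lemma prefix_case {w₁ w₂ : FreeGroup A} {p₁ p₂ : List (A × Bool)}
    (e : w₁.toWord ++ p₁ = w₂.toWord ++ p₂) (hp₁ : ∀ x ∈ p₁, x.2 = true)
    (hlen : w₁.toWord.length ≤ w₂.toWord.length) :
    ∃ z : FreeGroup A, Positive z ∧ w₁⁻¹ * w₂ = z := by
  have hpre : w₁.toWord <+: w₂.toWord :=
    List.prefix_of_prefix_length_le ⟨p₁, e⟩ ⟨p₂, rfl⟩ hlen
  obtain ⟨q, hq⟩ := hpre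
  have hqp : q ++ p₂ = p₁ := by
    have : w₁.toWord ++ p₁ = w₁.toWord ++ (q ++ p₂) := by
      rw [← List.append_assoc, hq, e]
    exact (List.append_cancel_left this).symm
  refine ⟨FreeGroup.mk q, ?_, ?_⟩
  · intro x hx
    have hsub : List.Sublist (FreeGroup.reduce q) q := FreeGroup.Red.sublist FreeGroup.reduce.red
    have hxq : x ∈ q := hsub.mem (by rwa [FreeGroup.toWord_mk] at hx)
    exact hp₁ x (by rw [← hqp]; exact List.mem_append.2 (Or.inl hxq))
  · have hw₂ : w₂ = w₁ * FreeGroup.mk q := by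
      conv_lhs => rw [← FreeGroup.mk_toWord (x := w₂), ← hq]
      rw [← FreeGroup.mul_mk, FreeGroup.mk_toWord]
    rw [hw₂, ← mul_assoc, inv_mul_cancel, one_mul]

/-- If `w₁, w₂` are right-positive, `v₁, v₂` are positive and `w₁v₁ = w₂v₂`,
then `w₁⁻¹w₂ = z^δ` for some positive `z` and `δ ∈ {1, −1}`. -/
theorem rightPositive_decomp (w₁ w₂ v₁ v₂ : FreeGroup A)
    (h₁ : RightPositive w₁) (h₂ : RightPositive w₂)
    (hv₁ : Positive v₁) (hv₂ : Positive v₂)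
    (h : w₁ * v₁ = w₂ * v₂) :
    ∃ (z : FreeGroup A) (δ : ℤ), Positive z ∧ (δ = 1 ∨ δ = -1) ∧ w₁⁻¹ * w₂ = z ^ δ := by
  obtain ⟨p₁, e₁, hp₁⟩ := rightPos_mul_pos h₁ hv₁
  obtain ⟨p₂, e₂, hp₂⟩ := rightPos_mul_pos h₂ hv₂
  have e : w₁.toWord ++ p₁ = w₂.toWord ++ p₂ := by rw [← e₁, ← e₂, h]
  rcases le_total w₁.toWord.length w₂.toWord.length with hlen | hlen
  · obtain ⟨z, hz, hzw⟩ := prefix_case e hp₁ hlen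
    exact ⟨z, 1, hz, Or.inl rfl, by rw [zpow_one]; exact hzw⟩
  · obtain ⟨z, hz, hzw⟩ := prefix_case e.symm hp₂ hlen
    refine ⟨z, -1, hz, Or.inr rfl, ?_⟩
    rw [zpow_neg_one, ← hzw]
    simp [mul_inv_rev]

end PositiveWords
end

section
/- Define the binary relation R on F(A) by: R u v holds if and only if u is right-positive and v = u·(of x) for some x ∈ A. Then for every w ∈ F(A), w is related to the identity element 1 by the equivalence relation generated by R (its reflexive-symmetric-transitive closure) if and only if w is positive. -/
namespace PositiveWords

variable {A : Type*} [DecidableEq A]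

/-- `R u v` iff `u` is right-positive and `v = u · (of x)` for some generator `x`. -/
def R (u v : FreeGroup A) : Prop :=
  RightPositive u ∧ ∃ x : A, v = u * FreeGroup.of x

lemma degree_all_true {t : List (A × Bool)} (h : ∀ p ∈ t, p.2 = true) :
    degree t = t.length := by
  induction t with
  | nil => rfl
  | cons p t ih =>
    have hp := h p (by simp)
    have : degree (p :: t) = (if p.2 then (1:ℤ) else -1) + degree t := by
      simp [degree]
    rw [this, hp, ih fun q hq => h q (by simp [hq])]
    simp
    ring

lemma positive_rightPositive {w : FreeGroup A} (h : Positive w) : RightPositive w := by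
  intro s t hst
  have : degree t = t.length := degree_all_true fun p hp => h p (by rw [hst]; simp [hp])
  rw [this]
  positivity

lemma reduce_all_true {l : List (A × Bool)} (h : ∀ p ∈ l, p.2 = true) :
    FreeGroup.reduce l = l := by
  induction l with
  | nil => rfl
  | cons p l ih =>
    rw [FreeGroup.reduce.cons, ih fun q hq => h q (by simp [hq])]
    cases l with
    | nil => rfl
    | cons q t =>
      have hp := h p (by simp)
      have hq := h q (by simp)
      simp [hp, hq]

/-- If the head of a reduced word is removed, the rest is reduced, and there is no
cancellation between the head and the next letter. -/
lemma reduce_of_cons {h : A × Bool} {l : List (A × Bool)}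
    (H : FreeGroup.reduce (h :: l) = h :: l) :
    FreeGroup.reduce l = l ∧ ∀ y t, l = y :: t → ¬(h.1 = y.1 ∧ h.2 = !y.2) := by
  rw [FreeGroup.reduce.cons] at H
  rcases hr : FreeGroup.reduce l with _ | ⟨y, t⟩ <;> rw [hr] at H
  · simp only at H
    have : l = [] := by
      have := congrArg List.length H
      simpa using this
    subst this
    exact ⟨rfl, by simp⟩
  · simp only at H
    split_ifs at H with hc
    · -- t = h :: l, impossible by length
      exfalso
      have hlen : (FreeGroup.reduce l).length ≤ l.length :=
        (FreeGroup.reduce.red (L := l)).length_le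
      rw [hr] at hlen
      have h1 : t.length = l.length + 1 := by simpa using congrArg List.length H
      simp at hlen
      omega
    · have hl : l = y :: t := by
        injection H with _ h2
        exact h2.symm
      constructor
      · rw [hl, ← hr, hl]
      · rintro y' t' hy'
        rw [hl] at hy'
        injection hy' with e1 _
        rw [← e1]
        exact hc

lemma reduce_append_single {l : List (A × Bool)} (a : A × Bool)
    (H : FreeGroup.reduce l = l)
    (hlast : ∀ y t, l = t ++ [y] → ¬(y.1 = a.1 ∧ y.2 = !a.2)) :
    FreeGroup.reduce (l ++ [a]) = l ++ [a] := by
  induction l with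
  | nil => rfl
  | cons h t ih =>
    obtain ⟨ht, hnc⟩ := reduce_of_cons H
    have ih' : FreeGroup.reduce (t ++ [a]) = t ++ [a] :=
      ih ht (fun y t' hy => hlast y (h :: t') (by rw [hy]; rfl))
    have : (h :: t) ++ [a] = h :: (t ++ [a]) := rfl
    rw [this, FreeGroup.reduce.cons, ih']
    cases t with
    | nil =>
      have := hlast h [] rfl
      simp only [List.nil_append]
      rw [if_neg]
      intro ⟨e1, e2⟩
      exact this ⟨e1, e2⟩
    | cons y t' =>
      have := hnc y t' rfl
      simp only [List.cons_append]
      rw [if_neg this]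

lemma toWord_mul_of {u : FreeGroup A} {x : A}
    (h : FreeGroup.reduce (u.toWord ++ [(x, true)]) = u.toWord ++ [(x, true)]) :
    (u * FreeGroup.of x).toWord = u.toWord ++ [(x, true)] := by
  conv_lhs => rw [← FreeGroup.mk_toWord (x := u)]
  rw [FreeGroup.of, FreeGroup.mul_mk, FreeGroup.toWord_mk, h]

lemma positive_mul_of {u : FreeGroup A} (hu : Positive u) (x : A) :
    Positive (u * FreeGroup.of x) := by
  have hall : ∀ p ∈ u.toWord ++ [(x, true)], p.2 = true := by
    intro p hp
    rcases List.mem_append.1 hp with h | h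
    · exact hu p h
    · simp at h; rw [h]
  intro p hp
  rw [toWord_mul_of (reduce_all_true hall)] at hp
  exact hall p hp

lemma positive_of_R {u v : FreeGroup A} (h : R u v) (hv : Positive v) : Positive u := by
  obtain ⟨hru, x, rfl⟩ := h
  have hlast : ∀ y t, u.toWord = t ++ [y] → ¬(y.1 = x ∧ y.2 = !(true : Bool)) := by
    intro y t hy ⟨_, hy2⟩
    have := hru t [y] hy
    have hd : degree [y] = if y.2 then (1:ℤ) else -1 := by simp [degree]
    rw [hd] at this
    simp at hy2
    rw [hy2] at this
    simp at this
  have hred := reduce_append_single (x, true) (FreeGroup.reduce_toWord u) hlast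
  have htw := toWord_mul_of hred
  intro p hp
  exact hv p (by rw [htw]; exact List.mem_append_left _ hp)

lemma positive_iff_of_eqvGen {u v : FreeGroup A} (h : Relation.EqvGen R u v) :
    (Positive u ↔ Positive v) := by
  induction h with
  | rel a b hab =>
    constructor
    · intro ha
      obtain ⟨_, x, rfl⟩ := hab
      exact positive_mul_of ha x
    · exact positive_of_R hab
  | refl a => rfl
  | symm a b _ ih => exact ih.symm
  | trans a b c _ _ ih1 ih2 => exact ih1.trans ih2

lemma eqvGen_of_all_true : ∀ l : List (A × Bool), (∀ p ∈ l, p.2 = true) →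
    Relation.EqvGen R 1 (FreeGroup.mk l) := by
  intro l
  induction l using List.reverseRecOn with
  | nil => intro _; rw [← FreeGroup.one_eq_mk]; exact Relation.EqvGen.refl 1
  | append_singleton l a ih =>
    intro h
    have hl : ∀ p ∈ l, p.2 = true := fun p hp => h p (List.mem_append_left _ hp)
    have hmkl : (FreeGroup.mk l).toWord = l := by
      rw [FreeGroup.toWord_mk, reduce_all_true hl]
    have hpos : Positive (FreeGroup.mk l) := by
      intro p hp; rw [hmkl] at hp; exact hl p hp
    have ha : a = (a.1, true) := by
      have := h a (List.mem_append_right _ (by simp))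
      rw [← this]
    have hstep : R (FreeGroup.mk l) (FreeGroup.mk (l ++ [a])) := by
      refine ⟨positive_rightPositive hpos, a.1, ?_⟩
      rw [FreeGroup.of, FreeGroup.mul_mk, ← ha]
    exact Relation.EqvGen.trans _ _ _ (ih hl)
      (Relation.EqvGen.rel _ _ hstep)

/-- `w` is related to `1` by the equivalence relation generated by `R` iff `w` is positive. -/
theorem eqvGen_one_iff_positive (w : FreeGroup A) :
    Relation.EqvGen (R (A := A)) w 1 ↔ Positive w := by
  constructor
  · intro h
    rw [positive_iff_of_eqvGen h]
    intro p hp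
    simp [FreeGroup.toWord_one] at hp
  · intro h
    have := eqvGen_of_all_true w.toWord h
    rw [FreeGroup.mk_toWord] at this
    exact this.symm _ _

end PositiveWords
end

section
/- For all a, b, c, d ∈ F(A), the pairs (a, b) and (c, d) are related by the equivalence relation generated by R (its reflexive-symmetric-transitive closure) if and only if a·b = c·d in F(A). -/
/-! The product `a * b` is invariant under `R`. Conversely, `R` moves one letter at a time
from the end of the first factor to the front of the second, so every pair `(a, b)` is
connected to `(1, a * b)`. -/

namespace SplitMachine

variable {A : Type*}

/-- `R (a, b) (c, d)` iff `c = a · (of x)⁻¹` and `d = (of x) · b` for some `x ∈ A`. -/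
def R (P Q : FreeGroup A × FreeGroup A) : Prop :=
  ∃ x : A, Q.1 = P.1 * (FreeGroup.of x)⁻¹ ∧ Q.2 = FreeGroup.of x * P.2

open Relation FreeGroup

theorem R.mul_eq_mul {P Q : FreeGroup A × FreeGroup A} (h : R P Q) :
    P.1 * P.2 = Q.1 * Q.2 := by
  obtain ⟨x, h₁, h₂⟩ := h
  simp [h₁, h₂, mul_assoc]

theorem mul_eq_mul_of_eqvGen {P Q : FreeGroup A × FreeGroup A} (h : EqvGen R P Q) :
    P.1 * P.2 = Q.1 * Q.2 :=
  (InvImage.equivalence _ _ eq_equivalence).eqvGen_iff.1 (h.mono fun _ _ => R.mul_eq_mul)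

theorem R.mul_of (a b : FreeGroup A) (x : A) : R (a * of x, b) (a, of x * b) :=
  ⟨x, by simp, rfl⟩

theorem R.inv_of_mul (a b : FreeGroup A) (x : A) : R (a, (of x)⁻¹ * b) (a * (of x)⁻¹, b) :=
  ⟨x, rfl, by simp⟩

theorem eqvGen_mul_shift (a g b : FreeGroup A) : EqvGen R (a * g, b) (a, g * b) := by
  induction g using FreeGroup.induction_on generalizing a b with
  | C1 => simpa using EqvGen.refl _
  | of x => exact EqvGen.rel _ _ (R.mul_of a b x)
  | inv_of x _ => exact EqvGen.symm _ _ (EqvGen.rel _ _ (R.inv_of_mul a b x))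
  | mul u v hu hv =>
    have h₁ : EqvGen R (a * (u * v), b) (a * u, v * b) := by
      simpa only [mul_assoc] using hv (a * u) b
    exact EqvGen.trans _ _ _ h₁ (by simpa only [mul_assoc] using hu a (v * b))

theorem eqvGen_one_mul (a b : FreeGroup A) : EqvGen R (a, b) (1, a * b) := by
  simpa using eqvGen_mul_shift 1 a b

/-- `(a, b)` and `(c, d)` are related by the equivalence relation generated by `R`
iff `a·b = c·d`. -/
theorem eqvGen_iff_mul_eq (a b c d : FreeGroup A) :
    Relation.EqvGen (R (A := A)) (a, b) (c, d) ↔ a * b = c * d := by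
  refine ⟨mul_eq_mul_of_eqvGen, fun h => ?_⟩
  have hcd := EqvGen.symm _ _ (eqvGen_one_mul c d)
  rw [← h] at hcd
  exact EqvGen.trans _ _ _ (eqvGen_one_mul a b) hcd

end SplitMachine
end

section
/- For all a, b ∈ F(A) there is a sequence of pairs (u₀, v₀), (u₁, v₁), …, (u_k, v_k) in F(A) × F(A) with k = |b|, such that (u₀, v₀) = (a·b, 1), (u_k, v_k) = (a, b), each consecutive pair is related by R in one direction or the other (i.e. R (uᵢ, vᵢ) (uᵢ₊₁, vᵢ₊₁) or R (uᵢ₊₁, vᵢ₊₁) (uᵢ, vᵢ) for each i < k), and |uᵢ| + |vᵢ| ≤ |a| + |b| for every i ≤ k. -/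
/-!
Write `w` for the reduced word of `b` and `n = |b|`. The chain is
`(uᵢ, vᵢ) = (a · w[0, n - i), w[n - i, n))`: at each step the last letter of the prefix moves
to the front of the suffix, which is an `R`-step forwards if the letter is a generator and
backwards if it is an inverse generator. Along the chain `|uᵢ| + |vᵢ| ≤ |a| + |w|`, since the
prefix and the suffix together have length `|w|`.
-/

namespace SplitMachine

variable {A : Type*} [DecidableEq A]

open FreeGroup

omit [DecidableEq A] in
theorem symmGen_R_move_letter (g : FreeGroup A) (l : A × Bool) (s : List (A × Bool)) :
    Relation.SymmGen R (g * mk [l], mk s) (g, mk (l :: s)) := by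
  obtain ⟨x, _ | _⟩ := l
  · have hx : mk [(x, false)] = (of x)⁻¹ := by rw [of, inv_mk]; rfl
    refine Or.inr ⟨x, congrArg (g * ·) hx, ?_⟩
    rw [← inv_mul_eq_iff_eq_mul, ← hx, mul_mk]
    rfl
  · refine Or.inl ⟨x, (mul_inv_cancel_right g (of x)).symm, ?_⟩
    rw [of, mul_mk]
    rfl

omit [DecidableEq A] in
theorem symmGen_R_take_succ_drop_succ (g : FreeGroup A) (w : List (A × Bool)) {j : ℕ}
    (hj : j < w.length) :
    Relation.SymmGen R (g * mk (w.take (j + 1)), mk (w.drop (j + 1)))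
      (g * mk (w.take j), mk (w.drop j)) := by
  rw [List.take_succ_eq_append_getElem hj, ← mul_mk, ← mul_assoc, List.drop_eq_getElem_cons hj]
  exact symmGen_R_move_letter _ _ _

theorem norm_mul_mk_take_add_norm_mk_drop_le (g : FreeGroup A) (w : List (A × Bool)) (j : ℕ) :
    norm (g * mk (w.take j)) + norm (mk (w.drop j)) ≤ norm g + w.length :=
  calc norm (g * mk (w.take j)) + norm (mk (w.drop j))
      ≤ norm g + (w.take j).length + (w.drop j).length :=
        add_le_add ((FreeGroup.norm_mul_le _ _).trans (add_le_add_right norm_mk_le _)) norm_mk_le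
    _ = norm g + w.length := by rw [add_assoc, ← List.length_append, List.take_append_drop]

/-- From `(a·b, 1)` one can reach `(a, b)` by a chain of `|b|` `R`-steps (in either
direction), never exceeding total length `|a| + |b|`. -/
theorem exists_chain_split (a b : FreeGroup A) :
    ∃ u v : ℕ → FreeGroup A,
      u 0 = a * b ∧ v 0 = 1 ∧
      u b.toWord.length = a ∧ v b.toWord.length = b ∧
      (∀ i < b.toWord.length,
        R (u i, v i) (u (i + 1), v (i + 1)) ∨ R (u (i + 1), v (i + 1)) (u i, v i)) ∧
      (∀ i ≤ b.toWord.length,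
        (u i).toWord.length + (v i).toWord.length ≤ a.toWord.length + b.toWord.length) := by
  set w := b.toWord
  refine ⟨fun i => a * mk (w.take (w.length - i)), fun i => mk (w.drop (w.length - i)),
    ?_, ?_, ?_, ?_, fun i hi => ?_, fun i _ => norm_mul_mk_take_add_norm_mk_drop_le a w _⟩
  · simp [w, mk_toWord]
  · simp [one_eq_mk]
  · simp [one_eq_mk]
  · simp [w, mk_toWord]
  · have hsucc : w.length - i = w.length - (i + 1) + 1 := by omega
    simp only [hsucc]
    exact symmGen_R_take_succ_drop_succ a w (j := w.length - (i + 1)) (by omega)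

end SplitMachine
end

section
/- For any computation of the machine copy^A the following hold. (1) If ((a, b, c), s) ↝ P and b ≠ 1 or c ≠ 1, then P = ((a, b, c), s). (2) If ((a, b, c), σ) ↝ ((a′, b′, c′), σ′) then c·a = c′·a′ in F(A). (3) If ((a, b, c), σ) ↝ ((a′, b′, c′), σ′) with σ ∈ {q₂, f} and a ≠ b, then σ′ ∈ {q₂, f} and a⁻¹·b = a′⁻¹·b′. -/
namespace CopyMachine

/-- The four states of the machine `copy^A`. -/
inductive St | s | q₁ | q₂ | f

/-- Configurations of `copy^A`. -/
abbrev Cfg (A : Type*) := (FreeGroup A × FreeGroup A × FreeGroup A) × St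

/-- `g` is a generator or the inverse of a generator. -/
def IsGen {A : Type*} (g : FreeGroup A) : Prop :=
  ∃ x : A, g = FreeGroup.of x ∨ g = (FreeGroup.of x)⁻¹

/-- The basic steps of `copy^A`. -/
def Step0 {A : Type*} (P Q : Cfg A) : Prop :=
  (∃ a b c, b = 1 ∧ c = 1 ∧ P = ((a, b, c), St.s) ∧ Q = ((a, b, c), St.q₁)) ∨
  (∃ a b c g, IsGen g ∧ P = ((a, b, c), St.q₁) ∧ Q = ((g⁻¹ * a, b, c * g), St.q₁)) ∨
  (∃ a b c, a = 1 ∧ b = 1 ∧ P = ((a, b, c), St.q₁) ∧ Q = ((a, b, c), St.q₂)) ∨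
  (∃ a b c g, IsGen g ∧ P = ((a, b, c), St.q₂) ∧ Q = ((g * a, g * b, c * g⁻¹), St.q₂)) ∨
  (∃ a b c, c = 1 ∧ P = ((a, b, c), St.q₂) ∧ Q = ((a, b, c), St.f))

/-- The one-step relation: the symmetric closure of the basic steps. -/
def Step {A : Type*} (P Q : Cfg A) : Prop := Step0 P Q ∨ Step0 Q P

/-- The reachability relation of `copy^A` (chains of steps). -/
def Reach {A : Type*} : Cfg A → Cfg A → Prop := Relation.ReflTransGen Step

private lemma step0_ca {A : Type*} {P Q : Cfg A} (h : Step0 P Q) :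
    P.1.2.2 * P.1.1 = Q.1.2.2 * Q.1.1 := by
  rcases h with ⟨a,b,c,_,_,rfl,rfl⟩ | ⟨a,b,c,g,_,rfl,rfl⟩ | ⟨a,b,c,_,_,rfl,rfl⟩ |
    ⟨a,b,c,g,_,rfl,rfl⟩ | ⟨a,b,c,_,rfl,rfl⟩ <;> simp <;> group

private lemma step_ca {A : Type*} {P Q : Cfg A} (h : Step P Q) :
    P.1.2.2 * P.1.1 = Q.1.2.2 * Q.1.1 :=
  h.elim step0_ca fun h' => (step0_ca h').symm

private lemma no_step_s {A : Type*} {a b c : FreeGroup A} {Q : Cfg A}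
    (h : Step ((a, b, c), St.s) Q) (hbc : b ≠ 1 ∨ c ≠ 1) : False := by
  rcases h with h | h <;>
    rcases h with ⟨a',b',c',h1,h2,he,_⟩ | ⟨a',b',c',g,_,he,he2⟩ |
      ⟨a',b',c',_,_,he,he2⟩ | ⟨a',b',c',g,_,he,he2⟩ | ⟨a',b',c',_,he,he2⟩ <;>
    simp_all

private lemma step_inv3 {A : Type*} {P Q : Cfg A} (h : Step P Q)
    (hσ : P.2 = St.q₂ ∨ P.2 = St.f) (hne : P.1.1 ≠ P.1.2.1) :
    (Q.2 = St.q₂ ∨ Q.2 = St.f) ∧ P.1.1⁻¹ * P.1.2.1 = Q.1.1⁻¹ * Q.1.2.1 := by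
  rcases h with h | h <;>
    rcases h with ⟨a,b,c,h1,h2,rfl,rfl⟩ | ⟨a,b,c,g,_,rfl,rfl⟩ |
      ⟨a,b,c,h1,h2,rfl,rfl⟩ | ⟨a,b,c,g,_,rfl,rfl⟩ | ⟨a,b,c,_,rfl,rfl⟩ <;>
    simp_all <;> group

/-- Basic properties of computations of `copy^A`. -/
theorem copy_computation_properties {A : Type*} :
    (∀ (a b c : FreeGroup A) (P : Cfg A),
      Reach ((a, b, c), St.s) P → (b ≠ 1 ∨ c ≠ 1) → P = ((a, b, c), St.s)) ∧
    (∀ (a b c a' b' c' : FreeGroup A) (σ σ' : St),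
      Reach ((a, b, c), σ) ((a', b', c'), σ') → c * a = c' * a') ∧
    (∀ (a b c a' b' c' : FreeGroup A) (σ σ' : St),
      Reach ((a, b, c), σ) ((a', b', c'), σ') → (σ = St.q₂ ∨ σ = St.f) → a ≠ b →
      (σ' = St.q₂ ∨ σ' = St.f) ∧ a⁻¹ * b = a'⁻¹ * b') := by
  refine ⟨?_, ?_, ?_⟩
  · intro a b c P h hbc
    rcases (Relation.ReflTransGen.cases_head h) with rfl | ⟨Q, hQ, _⟩
    · rfl
    · exact absurd hQ (fun h' => no_step_s h' hbc)
  · intro a b c a' b' c' σ σ' h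
    have : ∀ P Q : Cfg A, Reach P Q → P.1.2.2 * P.1.1 = Q.1.2.2 * Q.1.1 := by
      intro P Q h
      induction h with
      | refl => rfl
      | tail _ hs ih => exact ih.trans (step_ca hs)
    exact this _ _ h
  · intro a b c a' b' c' σ σ' h hσ hne
    have key : ∀ P Q : Cfg A, Reach P Q → (P.2 = St.q₂ ∨ P.2 = St.f) →
        P.1.1 ≠ P.1.2.1 →
        (Q.2 = St.q₂ ∨ Q.2 = St.f) ∧ P.1.1⁻¹ * P.1.2.1 = Q.1.1⁻¹ * Q.1.2.1 := by
      intro P Q h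
      induction h with
      | refl => exact fun h1 h2 => ⟨h1, rfl⟩
      | @tail M R _ hs ih =>
        intro h1 h2
        obtain ⟨hmid, heq⟩ := ih h1 h2
        have hne' : M.1.1 ≠ M.1.2.1 := by
          intro hab
          apply h2
          have h5 : P.1.1⁻¹ * P.1.2.1 = (1 : FreeGroup A) := by rw [heq, hab]; group
          rwa [inv_mul_eq_one] at h5
        obtain ⟨h3, h4⟩ := step_inv3 hs hmid hne'
        exact ⟨h3, heq.trans h4⟩
    exact key _ _ h hσ hne

end CopyMachine
end

section
/- For the machine copy^A the following input-output description holds. (i) ((w₁, v₁, 1), s) ↝ ((w₂, v₂, 1), s) if and only if (w₁, v₁) = (w₂, v₂). (ii) ((w₁, v₁, 1), f) ↝ ((w₂, v₂, 1), f) if and only if (w₁, v₁) = (w₂, v₂). (iii) ((w₁, v₁, 1), s) ↝ ((w₂, v₂, 1), f) if and only if v₁ = 1, w₂ = w₁ and v₂ = w₁. In particular the first tape is immutable: its content is the same at the start and the end of any such computation. -/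
/-!
In every step the product `c * a` of the third and first tapes is unchanged. While the machine
is in `s` or `q₁` the second tape is untouched, and while it is in `q₂` or `f` the product
`c * b` is unchanged; the only passage between the two halves, `q₁ ↔ q₂`, happens at `a = b = 1`,
where `c * a = c * b`. Hence a computation between configurations with `c = 1` remembers the
first tape, and remembers the second one unless it crosses between the halves, which forces
`b = 1` on the `s` side and `b = a` on the `f` side. Conversely `s → q₁ → q₂ → f` copies `w`
from the first tape to the third (letter by letter) and back onto the first and second tapes.
-/

namespace CopyMachine

section Computations

variable {A : Type*}

theorem Reach.preserves {I : Cfg A → Prop} (hI : ∀ {P Q}, Step0 P Q → (I P ↔ I Q))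
    {P Q : Cfg A} (h : Reach P Q) (hP : I P) : I Q := by
  induction h with
  | refl => exact hP
  | tail _ hstep ih =>
    rcases hstep with h | h
    · exact (hI h).mp ih
    · exact (hI h).mpr ih

/-- The invariant of computations started at `((u, v, 1), s)`. -/
def StartInvariant (u v : FreeGroup A) : Cfg A → Prop
  | ((a, b, c), St.s) | ((a, b, c), St.q₁) => c * a = u ∧ b = v
  | ((a, b, c), St.q₂) | ((a, b, c), St.f) => c * a = u ∧ c * b = u ∧ v = 1

/-- The invariant of computations started at `((u, v, 1), f)`. -/
def FinalInvariant (u v : FreeGroup A) : Cfg A → Prop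
  | ((a, b, c), St.s) | ((a, b, c), St.q₁) => c * a = u ∧ b = 1 ∧ v = u
  | ((a, b, c), St.q₂) | ((a, b, c), St.f) => c * a = u ∧ c * b = v

theorem startInvariant_step0 (u v : FreeGroup A) {P Q : Cfg A} (h : Step0 P Q) :
    StartInvariant u v P ↔ StartInvariant u v Q := by
  rcases h with ⟨a, b, c, -, -, rfl, rfl⟩ | ⟨a, b, c, g, -, rfl, rfl⟩ |
    ⟨a, b, c, rfl, rfl, rfl, rfl⟩ | ⟨a, b, c, g, -, rfl, rfl⟩ | ⟨a, b, c, -, rfl, rfl⟩ <;>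
    simp only [StartInvariant, mul_assoc, mul_inv_cancel_left, inv_mul_cancel_left, mul_one]
  constructor
  · rintro ⟨hc, rfl⟩
    exact ⟨hc, hc, rfl⟩
  · rintro ⟨hc, -, rfl⟩
    exact ⟨hc, rfl⟩

theorem finalInvariant_step0 (u v : FreeGroup A) {P Q : Cfg A} (h : Step0 P Q) :
    FinalInvariant u v P ↔ FinalInvariant u v Q := by
  rcases h with ⟨a, b, c, -, -, rfl, rfl⟩ | ⟨a, b, c, g, -, rfl, rfl⟩ |
    ⟨a, b, c, rfl, rfl, rfl, rfl⟩ | ⟨a, b, c, g, -, rfl, rfl⟩ | ⟨a, b, c, -, rfl, rfl⟩ <;>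
    simp only [FinalInvariant, mul_assoc, mul_inv_cancel_left, inv_mul_cancel_left, mul_one]
  constructor
  · rintro ⟨hc, -, rfl⟩
    exact ⟨hc, hc⟩
  · rintro ⟨rfl, rfl⟩
    exact ⟨rfl, trivial, rfl⟩

theorem reach_q₁ (a : FreeGroup A) :
    ∀ r b c : FreeGroup A, Reach ((a * r, b, c), St.q₁) ((r, b, c * a), St.q₁) := by
  have move {g : FreeGroup A} (hg : IsGen g) (r b c : FreeGroup A) :
      Reach ((g * r, b, c), St.q₁) ((r, b, c * g), St.q₁) := by
    refine .single (Or.inl (.inr (.inl ⟨g * r, b, c, g, hg, rfl, ?_⟩)))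
    rw [inv_mul_cancel_left]
  induction a using FreeGroup.induction_on with
  | C1 => intro r b c; simpa using .refl
  | of x => exact move ⟨x, .inl rfl⟩
  | inv_of x _ => exact move ⟨x, .inr rfl⟩
  | mul x y ihx ihy =>
    intro r b c
    have h := (ihx (y * r) b c).trans (ihy r b (c * x))
    simp only [mul_assoc] at h ⊢
    exact h

theorem reach_q₂ (d : FreeGroup A) :
    ∀ a b c : FreeGroup A, Reach ((a, b, c * d), St.q₂) ((d * a, d * b, c), St.q₂) := by
  have move {g : FreeGroup A} (hg : IsGen g) (a b c : FreeGroup A) :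
      Reach ((a, b, c * g), St.q₂) ((g * a, g * b, c), St.q₂) := by
    refine .single (Or.inl (.inr (.inr (.inr (.inl ⟨a, b, c * g, g, hg, rfl, ?_⟩)))))
    rw [mul_inv_cancel_right]
  induction d using FreeGroup.induction_on with
  | C1 => intro a b c; simpa using .refl
  | of x => exact move ⟨x, .inl rfl⟩
  | inv_of x _ => exact move ⟨x, .inr rfl⟩
  | mul x y ihx ihy =>
    intro a b c
    have h := (ihy a b (c * x)).trans (ihx (y * a) (y * b) c)
    simp only [mul_assoc] at h ⊢
    exact h

theorem reach_copy (w : FreeGroup A) : Reach ((w, 1, 1), St.s) ((w, w, 1), St.f) := by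
  have load : Reach ((w, 1, 1), St.q₁) ((1, 1, w), St.q₁) := by
    simpa using reach_q₁ w 1 1 1
  have unload : Reach ((1, 1, w), St.q₂) ((w, w, 1), St.q₂) := by
    simpa using reach_q₂ w 1 1 1
  have start : Step ((w, 1, 1), St.s) ((w, 1, 1), St.q₁) :=
    Or.inl (Or.inl ⟨w, 1, 1, rfl, rfl, rfl, rfl⟩)
  have cross : Step ((1, 1, w), St.q₁) ((1, 1, w), St.q₂) :=
    Or.inl (.inr (.inr (.inl ⟨1, 1, w, rfl, rfl, rfl, rfl⟩)))
  have finish : Step ((w, w, 1), St.q₂) ((w, w, 1), St.f) :=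
    Or.inl (.inr (.inr (.inr (.inr ⟨w, w, 1, rfl, rfl, rfl⟩))))
  exact ((((Relation.ReflTransGen.single start).trans load).tail cross).trans unload).tail finish

end Computations

/-- The input-output description of `copy^A`. -/
theorem copy_io {A : Type*} :
    (∀ w₁ v₁ w₂ v₂ : FreeGroup A,
      Reach ((w₁, v₁, 1), St.s) ((w₂, v₂, 1), St.s) ↔ (w₁ = w₂ ∧ v₁ = v₂)) ∧
    (∀ w₁ v₁ w₂ v₂ : FreeGroup A,
      Reach ((w₁, v₁, 1), St.f) ((w₂, v₂, 1), St.f) ↔ (w₁ = w₂ ∧ v₁ = v₂)) ∧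
    (∀ w₁ v₁ w₂ v₂ : FreeGroup A,
      Reach ((w₁, v₁, 1), St.s) ((w₂, v₂, 1), St.f) ↔ (v₁ = 1 ∧ w₂ = w₁ ∧ v₂ = w₁)) := by
  refine ⟨fun w₁ v₁ w₂ v₂ => ⟨fun h => ?_, ?_⟩, fun w₁ v₁ w₂ v₂ => ⟨fun h => ?_, ?_⟩,
    fun w₁ v₁ w₂ v₂ => ⟨fun h => ?_, ?_⟩⟩
  · obtain ⟨hw, hv⟩ := h.preserves (startInvariant_step0 w₁ v₁) ⟨one_mul w₁, rfl⟩
    rw [one_mul] at hw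
    exact ⟨hw.symm, hv.symm⟩
  · rintro ⟨rfl, rfl⟩
    exact .refl
  · obtain ⟨hw, hv⟩ := h.preserves (finalInvariant_step0 w₁ v₁) ⟨one_mul w₁, one_mul v₁⟩
    rw [one_mul] at hw hv
    exact ⟨hw.symm, hv.symm⟩
  · rintro ⟨rfl, rfl⟩
    exact .refl
  · obtain ⟨hw, hv, h₁⟩ := h.preserves (startInvariant_step0 w₁ v₁) ⟨one_mul w₁, rfl⟩
    rw [one_mul] at hw hv
    exact ⟨h₁, hw, hv⟩
  · rintro ⟨rfl, rfl, rfl⟩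
    exact reach_copy _

end CopyMachine
end

section
/- For the machine div2 the following input-output description holds. (i) ((b, 0), s) ↝ ((b′, 0), s) if and only if there exist j ∈ ℤ and α, β ∈ {0, 1} with b = 2j − α and b′ = 2j − β. (ii) ((b, 0), s) ↝ ((b′, 0), f) if and only if b = 2b′ or b = 2b′ − 1. (iii) ((b, 0), f) ↝ ((b′, 0), f) if and only if b = b′. -/
/-!
In state `q₁` two units of `b` are traded for one unit of `d`, in state `q₂` one unit of `d`
for one unit of `b`; hence `value` (`⌈b/2⌉ + d` before the switch to `q₂`, `b + d` after it)
is invariant under every step, which gives all the necessary conditions. Conversely both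
`((b, 0), s)` and `((⌈b/2⌉, 0), f)` are connected to the hub `((0, ⌈b/2⌉), q₂)`, and `↝` is
symmetric.
-/

namespace Div2Machine

/-- The four states of the machine `div2`. -/
inductive St | s | q₁ | q₂ | f

/-- Configurations of `div2`. -/
abbrev Cfg := (ℤ × ℤ) × St

/-- The basic steps of `div2`. -/
def Step0 (P Q : Cfg) : Prop :=
  (∃ b d : ℤ, d = 0 ∧ P = ((b, d), St.s) ∧ Q = ((b, d), St.q₁)) ∨
  (∃ b d : ℤ, P = ((b, d), St.q₁) ∧ Q = ((b - 2, d + 1), St.q₁)) ∨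
  (∃ b d : ℤ, b = 0 ∧ P = ((b, d), St.q₁) ∧ Q = ((b, d), St.q₂)) ∨
  (∃ b d : ℤ, b = -1 ∧ P = ((b, d), St.q₁) ∧ Q = ((b + 1, d), St.q₂)) ∨
  (∃ b d : ℤ, P = ((b, d), St.q₂) ∧ Q = ((b + 1, d - 1), St.q₂)) ∨
  (∃ b d : ℤ, d = 0 ∧ P = ((b, d), St.q₂) ∧ Q = ((b, d), St.f))

/-- The one-step relation: the symmetric closure of the basic steps. -/
def Step (P Q : Cfg) : Prop := Step0 P Q ∨ Step0 Q P

/-- The reachability relation of `div2`. -/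
def Reach : Cfg → Cfg → Prop := Relation.ReflTransGen Step

/-- `(x + 1) / 2` is `⌈x / 2⌉`, as `Int` division rounds down. -/
def value : Cfg → ℤ
  | ((b, d), St.s) => (b + 2 * d + 1) / 2
  | ((b, d), St.q₁) => (b + 2 * d + 1) / 2
  | ((b, d), St.q₂) => b + d
  | ((b, d), St.f) => b + d

lemma value_eq_of_step0 {P Q : Cfg} (h : Step0 P Q) : value P = value Q := by
  rcases h with ⟨b, d, hd, rfl, rfl⟩ | ⟨b, d, rfl, rfl⟩ | ⟨b, d, hb, rfl, rfl⟩ |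
    ⟨b, d, hb, rfl, rfl⟩ | ⟨b, d, rfl, rfl⟩ | ⟨b, d, hd, rfl, rfl⟩ <;>
    simp only [value] <;> omega

lemma value_eq_of_reach {P Q : Cfg} (h : Reach P Q) : value P = value Q := by
  induction h with
  | refl => rfl
  | tail _ hstep ih =>
    exact ih.trans (hstep.elim value_eq_of_step0 fun h => (value_eq_of_step0 h).symm)

instance : Std.Symm Step := ⟨fun _ _ h => h.symm⟩

lemma reach_symm {P Q : Cfg} (h : Reach P Q) : Reach Q P :=
  Relation.ReflTransGen.stdSymm.symm _ _ h

lemma reach_of_chain (g : ℤ → Cfg) (hg : ∀ n, Step (g n) (g (n + 1))) (m n : ℤ) :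
    Reach (g m) (g n) :=
  (reflTransGen_of_succ (fun i j => Step (g i) (g j)) (fun i _ => hg i)
    (fun i _ => (hg i).symm)).lift g fun _ _ h => h

lemma reach_q₁_shift (b d k : ℤ) : Reach ((b, d), St.q₁) ((b - 2 * k, d + k), St.q₁) := by
  simpa using reach_of_chain (fun n => ((b - 2 * n, d + n), St.q₁))
    (fun n => Or.inl <| Or.inr <| Or.inl
      ⟨b - 2 * n, d + n, rfl, Prod.ext (Prod.ext (by ring) (by ring)) rfl⟩) 0 k

lemma reach_q₂_shift (b d k : ℤ) : Reach ((b, d), St.q₂) ((b + k, d - k), St.q₂) := by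
  simpa using reach_of_chain (fun n => ((b + n, d - n), St.q₂))
    (fun n => Or.inl <| Or.inr <| Or.inr <| Or.inr <| Or.inr <| Or.inl
      ⟨b + n, d - n, rfl, Prod.ext (Prod.ext (by ring) (by ring)) rfl⟩) 0 k

lemma reach_hub_of_s (b : ℤ) : Reach ((b, 0), St.s) ((0, (b + 1) / 2), St.q₂) := by
  set j := (b + 1) / 2
  have start : Step ((b, 0), St.s) ((b, 0), St.q₁) := Or.inl <| Or.inl ⟨b, 0, rfl, rfl, rfl⟩
  have descend : Reach ((b, 0), St.q₁) ((b - 2 * j, j), St.q₁) := by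
    simpa using reach_q₁_shift b 0 j
  have switch : Step ((b - 2 * j, j), St.q₁) ((0, j), St.q₂) := by
    rcases (by omega : b - 2 * j = 0 ∨ b - 2 * j = -1) with h | h <;> rw [h]
    · exact Or.inl <| Or.inr <| Or.inr <| Or.inl ⟨0, j, rfl, rfl, rfl⟩
    · exact Or.inl <| Or.inr <| Or.inr <| Or.inr <| Or.inl ⟨-1, j, rfl, rfl, by simp⟩
  exact ((Relation.ReflTransGen.single start).trans descend).tail switch

lemma reach_hub_of_f (b : ℤ) : Reach ((b, 0), St.f) ((0, b), St.q₂) := by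
  have finish : Step ((b, 0), St.q₂) ((b, 0), St.f) :=
    Or.inl <| Or.inr <| Or.inr <| Or.inr <| Or.inr <| Or.inr ⟨b, 0, rfl, rfl, rfl⟩
  have ascend : Reach ((0, b), St.q₂) ((b, 0), St.q₂) := by
    simpa using reach_q₂_shift 0 b b
  exact reach_symm (ascend.tail finish)

/-- The input-output description of `div2`. -/
theorem div2_io :
    (∀ b b' : ℤ, Reach ((b, 0), St.s) ((b', 0), St.s) ↔
      ∃ j α β : ℤ, (α = 0 ∨ α = 1) ∧ (β = 0 ∨ β = 1) ∧ b = 2 * j - α ∧ b' = 2 * j - β) ∧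
    (∀ b b' : ℤ, Reach ((b, 0), St.s) ((b', 0), St.f) ↔ (b = 2 * b' ∨ b = 2 * b' - 1)) ∧
    (∀ b b' : ℤ, Reach ((b, 0), St.f) ((b', 0), St.f) ↔ b = b') := by
  refine ⟨fun b b' => ⟨fun h => ?_, fun ⟨j, α, β, hα, hβ, hb, hb'⟩ => ?_⟩,
    fun b b' => ⟨fun h => ?_, fun h => ?_⟩,
    fun b b' => ⟨fun h => by simpa [value] using value_eq_of_reach h, fun h => h ▸ .refl⟩⟩
  · have hval := value_eq_of_reach h
    simp only [value] at hval
    exact ⟨(b + 1) / 2, 2 * ((b + 1) / 2) - b, 2 * ((b + 1) / 2) - b', by omega, by omega,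
      by ring, by omega⟩
  · have hub : (b' + 1) / 2 = (b + 1) / 2 := by omega
    exact (reach_hub_of_s b).trans (hub ▸ reach_symm (reach_hub_of_s b'))
  · have hval := value_eq_of_reach h
    simp only [value] at hval
    omega
  · obtain rfl : b' = (b + 1) / 2 := by omega
    exact (reach_hub_of_s b).trans (reach_symm (reach_hub_of_f _))

end Div2Machine
end

section
/- For the positivity-check machine the following holds for all m, m′ ∈ ℤ. (i) ((m, 0, 0, 0), s) ↝ ((m′, 0, 0, 0), s) if and only if m = m′. (ii) ((m, 0, 0, 0), f) ↝ ((m′, 0, 0, 0), f) if and only if m = m′. (iii) ((m, 0, 0, 0), s) ↝ ((m′, 0, 0, 0), f) if and only if m = m′ and m ≥ 1. In particular, the machine checks positivity: starting from (m, 0, 0, 0) in state s, the state f can be reached with all auxiliary coordinates reset to 0 exactly when m ≥ 1, and then only with the first coordinate unchanged. -/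
/-!
Every step is reversible, so `↝` is an equivalence relation and the negative directions follow
from a family of step-closed sets `Invariant m p`: the input `m` stays in `a` (in `a + c` while it
is being copied), and a verdict `p`, equal to `1 ≤ m` in state `s` and required in state `f`, is
carried by the sign of a quantity each loop conserves. For `m ≥ 1` an explicit run reaches `f`:
move `m` from `a` to `c`, copy it back to `a` and `b`, then halve `b` (rounding up) in the
`q₂ → d₁ → d₂ → q₂` loop until `b = 1`, and step to `f`.
-/

namespace PosCheckMachine

/-- The eight states of the positivity-check machine. -/
inductive St | s | q₁ | c₁ | c₂ | q₂ | d₁ | d₂ | f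

/-- Configurations of the positivity-check machine. -/
abbrev Cfg := (ℤ × ℤ × ℤ × ℤ) × St

/-- The basic steps of the positivity-check machine. -/
def Step0 (P Q : Cfg) : Prop :=
  (∃ a b c d : ℤ, b = 0 ∧ P = ((a, b, c, d), St.s) ∧ Q = ((a, b, c, d), St.q₁)) ∨
  (∃ a b c d : ℤ, b = 0 ∧ c = 0 ∧ P = ((a, b, c, d), St.q₁) ∧ Q = ((a, b, c, d), St.c₁)) ∨
  (∃ a b c d : ℤ, P = ((a, b, c, d), St.c₁) ∧ Q = ((a - 1, b, c + 1, d), St.c₁)) ∨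
  (∃ a b c d : ℤ, a = 0 ∧ b = 0 ∧ P = ((a, b, c, d), St.c₁) ∧ Q = ((a, b, c, d), St.c₂)) ∨
  (∃ a b c d : ℤ, P = ((a, b, c, d), St.c₂) ∧ Q = ((a + 1, b + 1, c - 1, d), St.c₂)) ∨
  (∃ a b c d : ℤ, c = 0 ∧ P = ((a, b, c, d), St.c₂) ∧ Q = ((a, b, c, d), St.q₂)) ∨
  (∃ a b c d : ℤ, d = 0 ∧ P = ((a, b, c, d), St.q₂) ∧ Q = ((a, b, c, d), St.d₁)) ∨
  (∃ a b c d : ℤ, P = ((a, b, c, d), St.d₁) ∧ Q = ((a, b - 2, c, d + 1), St.d₁)) ∨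
  (∃ a b c d : ℤ, b = 0 ∧ P = ((a, b, c, d), St.d₁) ∧ Q = ((a, b, c, d), St.d₂)) ∨
  (∃ a b c d : ℤ, b = -1 ∧ P = ((a, b, c, d), St.d₁) ∧ Q = ((a, b + 1, c, d), St.d₂)) ∨
  (∃ a b c d : ℤ, P = ((a, b, c, d), St.d₂) ∧ Q = ((a, b + 1, c, d - 1), St.d₂)) ∨
  (∃ a b c d : ℤ, d = 0 ∧ P = ((a, b, c, d), St.d₂) ∧ Q = ((a, b, c, d), St.q₂)) ∨
  (∃ a b c d : ℤ, b = 1 ∧ P = ((a, b, c, d), St.q₂) ∧ Q = ((a, b - 1, c, d), St.f))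

/-- The one-step relation: the symmetric closure of the basic steps. -/
def Step (P Q : Cfg) : Prop := Step0 P Q ∨ Step0 Q P

/-- The reachability relation of the positivity-check machine. -/
def Reach : Cfg → Cfg → Prop := Relation.ReflTransGen Step

lemma _root_.Relation.ReflTransGen.iff_of_forall_iff {α : Type*} {r : α → α → Prop}
    {I : α → Prop} (hI : ∀ a b, r a b → (I a ↔ I b)) {a b : α} (h : Relation.ReflTransGen r a b) :
    I a ↔ I b := by
  induction h with
  | refl => rfl
  | tail _ hbc ih => exact ih.trans (hI _ _ hbc)

def Invariant (m : ℤ) (p : Prop) : Cfg → Prop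
  | ((a, b, c, d), St.s) => a = m ∧ b = 0 ∧ c = 0 ∧ d = 0 ∧ (p ↔ 1 ≤ m)
  | ((a, b, c, d), St.q₁) => a = m ∧ b = 0 ∧ c = 0 ∧ d = 0 ∧ (p ↔ 1 ≤ m)
  | ((a, b, c, d), St.c₁) => a + c = m ∧ b = 0 ∧ d = 0 ∧ (p ↔ 1 ≤ m)
  | ((a, b, c, d), St.c₂) => a + c = m ∧ d = 0 ∧ (p ↔ 1 ≤ b - a + m)
  | ((a, b, c, d), St.q₂) => a = m ∧ c = 0 ∧ d = 0 ∧ (p ↔ 1 ≤ b)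
  | ((a, b, c, d), St.d₁) => a = m ∧ c = 0 ∧ (p ↔ 1 ≤ b + 2 * d)
  | ((a, b, c, d), St.d₂) => a = m ∧ c = 0 ∧ (p ↔ 1 ≤ b + d)
  | ((a, b, c, d), St.f) => a = m ∧ b = 0 ∧ c = 0 ∧ d = 0 ∧ p

lemma invariant_iff_of_step0 (m : ℤ) (p : Prop) {P Q : Cfg} (h : Step0 P Q) :
    Invariant m p P ↔ Invariant m p Q := by
  rcases h with ⟨a, b, c, d, _, rfl, rfl⟩ | ⟨a, b, c, d, _, _, rfl, rfl⟩ | ⟨a, b, c, d, rfl, rfl⟩ |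
    ⟨a, b, c, d, _, _, rfl, rfl⟩ | ⟨a, b, c, d, rfl, rfl⟩ | ⟨a, b, c, d, _, rfl, rfl⟩ |
    ⟨a, b, c, d, _, rfl, rfl⟩ | ⟨a, b, c, d, rfl, rfl⟩ | ⟨a, b, c, d, _, rfl, rfl⟩ |
    ⟨a, b, c, d, _, rfl, rfl⟩ | ⟨a, b, c, d, rfl, rfl⟩ | ⟨a, b, c, d, _, rfl, rfl⟩ |
    ⟨a, b, c, d, _, rfl, rfl⟩ <;>
  by_cases hp : p <;>
  simp only [Invariant, hp, true_iff, false_iff, iff_false, not_le, and_true, and_false] <;>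
  omega

lemma invariant_iff_of_reach (m : ℤ) (p : Prop) {P Q : Cfg} (h : Reach P Q) :
    Invariant m p P ↔ Invariant m p Q :=
  h.iff_of_forall_iff fun _ _ hPQ =>
    hPQ.elim (invariant_iff_of_step0 m p) fun hQP => (invariant_iff_of_step0 m p hQP).symm

lemma reach_of_step0 {P Q : Cfg} (h : Step0 P Q) : Reach P Q := .single (.inl h)

lemma reach_of_forall_step0 (f : ℤ → Cfg) (hf : ∀ i, Step0 (f i) (f (i + 1))) {n : ℤ}
    (hn : 0 ≤ n) : Reach (f 0) (f n) :=
  (reflTransGen_of_succ_of_le (fun i j => Step (f i) (f j))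
    (fun i _ => by rw [Order.succ_eq_add_one]; exact .inl (hf i)) hn).lift f fun _ _ h => h

lemma reach_c₁_loop (a b c d : ℤ) {n : ℤ} (hn : 0 ≤ n) :
    Reach ((a, b, c, d), St.c₁) ((a - n, b, c + n, d), St.c₁) := by
  simpa using reach_of_forall_step0 (fun i => ((a - i, b, c + i, d), St.c₁))
    (fun i => by simp [Step0, sub_add_eq_sub_sub, add_assoc]) hn

lemma reach_c₂_loop (a b c d : ℤ) {n : ℤ} (hn : 0 ≤ n) :
    Reach ((a, b, c, d), St.c₂) ((a + n, b + n, c - n, d), St.c₂) := by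
  simpa using reach_of_forall_step0 (fun i => ((a + i, b + i, c - i, d), St.c₂))
    (fun i => by simp [Step0, sub_add_eq_sub_sub, add_assoc]) hn

lemma reach_d₁_loop (a b c d : ℤ) {n : ℤ} (hn : 0 ≤ n) :
    Reach ((a, b, c, d), St.d₁) ((a, b - 2 * n, c, d + n), St.d₁) := by
  simpa using reach_of_forall_step0 (fun i => ((a, b - 2 * i, c, d + i), St.d₁))
    (fun i => by simp [Step0, sub_add_eq_sub_sub, add_assoc, mul_add]) hn

lemma reach_d₂_loop (a b c d : ℤ) {n : ℤ} (hn : 0 ≤ n) :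
    Reach ((a, b, c, d), St.d₂) ((a, b + n, c, d - n), St.d₂) := by
  simpa using reach_of_forall_step0 (fun i => ((a, b + i, c, d - i), St.d₂))
    (fun i => by simp [Step0, sub_add_eq_sub_sub, add_assoc]) hn

lemma reach_d₂_of_d₁ (a b c d : ℤ) (hb : b = 0 ∨ b = -1) :
    Reach ((a, b, c, d), St.d₁) ((a, 0, c, d), St.d₂) := by
  rcases hb with rfl | rfl <;> exact reach_of_step0 (by simp [Step0])

/-- `b - b / 2` is `⌈b / 2⌉`: the `d₁`-loop runs that many times and leaves `b ∈ {0, -1}`. -/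
lemma reach_q₂_halve (m b : ℤ) (hb : 0 ≤ b) :
    Reach ((m, b, 0, 0), St.q₂) ((m, b - b / 2, 0, 0), St.q₂) := by
  have hd₁ := reach_d₁_loop m b 0 0 (n := b - b / 2) (by omega)
  have hturn := reach_d₂_of_d₁ m (b - 2 * (b - b / 2)) 0 (b - b / 2) (by omega)
  have hd₂ := reach_d₂_loop m 0 0 (b - b / 2) (n := b - b / 2) (by omega)
  simp only [zero_add, sub_self] at hd₁ hd₂
  exact (reach_of_step0 (by simp [Step0])).trans <| hd₁.trans <| hturn.trans <| hd₂.trans <|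
    reach_of_step0 (by simp [Step0])

lemma reach_q₂_one (m b : ℤ) (hb : 1 ≤ b) :
    Reach ((m, b, 0, 0), St.q₂) ((m, 1, 0, 0), St.q₂) := by
  if hb₁ : b = 1 then subst hb₁; exact .refl
  else exact (reach_q₂_halve m b (by omega)).trans (reach_q₂_one m (b - b / 2) (by omega))
termination_by b.toNat
decreasing_by omega

lemma reach_s_f (m : ℤ) (hm : 1 ≤ m) : Reach ((m, 0, 0, 0), St.s) ((m, 0, 0, 0), St.f) := by
  have hq₁ : Reach ((m, 0, 0, 0), St.s) ((m, 0, 0, 0), St.q₁) := reach_of_step0 (by simp [Step0])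
  have hc₁ := reach_c₁_loop m 0 0 0 (n := m) (by omega)
  have hc₂ := reach_c₂_loop 0 0 m 0 (n := m) (by omega)
  simp only [sub_self, zero_add] at hc₁ hc₂
  exact hq₁.trans <| (reach_of_step0 (by simp [Step0])).trans <| hc₁.trans <|
    (reach_of_step0 (by simp [Step0])).trans <| hc₂.trans <|
    (reach_of_step0 (by simp [Step0])).trans <| (reach_q₂_one m m hm).trans <|
    reach_of_step0 (by simp [Step0])

/-- The machine checks positivity of the first coordinate. -/
theorem posCheck_io :
    (∀ m m' : ℤ, Reach ((m, 0, 0, 0), St.s) ((m', 0, 0, 0), St.s) ↔ m = m') ∧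
    (∀ m m' : ℤ, Reach ((m, 0, 0, 0), St.f) ((m', 0, 0, 0), St.f) ↔ m = m') ∧
    (∀ m m' : ℤ, Reach ((m, 0, 0, 0), St.s) ((m', 0, 0, 0), St.f) ↔ (m = m' ∧ 1 ≤ m)) := by
  refine ⟨fun m m' => ⟨fun h => ?_, by rintro rfl; exact .refl⟩,
    fun m m' => ⟨fun h => ?_, by rintro rfl; exact .refl⟩,
    fun m m' => ⟨fun h => ?_, fun ⟨hm', hm⟩ => hm' ▸ reach_s_f m hm⟩⟩
  · have := (invariant_iff_of_reach m (1 ≤ m) h).1 (by simp [Invariant])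
    simp only [Invariant] at this
    omega
  · have := (invariant_iff_of_reach m True h).1 (by simp [Invariant])
    simp only [Invariant] at this
    omega
  · have := (invariant_iff_of_reach m (1 ≤ m) h).1 (by simp [Invariant])
    simp only [Invariant] at this
    omega

end PosCheckMachine
end

section
/- Fix an integer d ≥ 1 and k ∈ ℕ, and let k_d = (k, k, …, k) ∈ U_d be the constant tuple. Then there exists m ∈ ℕ such that succ_d^[m](0_d) = k_d, and this m satisfies k^d ≤ d!·m and m ≤ (k + 1)^d; moreover max over 0 ≤ j ≤ m of |succ_d^[j](0_d)|₁ equals d·k. -/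
/-!
Read the tuples backwards, so that `succ_d` becomes `rsucc`, which acts at the head of a list.
Write `v^d` for `d` copies of `v`. If the tail after `0^d` starts with an entry `≥ k`, the counter
reaches `k^d` after `C(k + d, d) - 1` steps, and meanwhile the first `d` entries sum to at most
`d·k`. Induct on `d` and then on `k`: to get from `0^(d+1)` to `(k+1)^(d+1)`, first reach `k^(d+1)`,
then one step carries to `0^d (k+1)`, after which the `d` front entries climb to `(k+1)^d` below
the new entry `k+1`. Pascal's rule adds up the step counts. Finally
`d! · C(k + d, d) = (k+1)(k+2)⋯(k+d)`, which lies between `k^d + d!` and `d! (k+1)^d`.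
-/

namespace CounterValues

/-- Successor on reversed tuples (last coordinate first): increment the first entry if it is
strictly below the next one, otherwise zero it and recurse on the tail. -/
def rsucc : List ℕ → List ℕ
  | [] => []
  | [i] => [i + 1]
  | i :: j :: rest => if i < j then (i + 1) :: j :: rest else 0 :: rsucc (j :: rest)

/-- The successor function `succ_d` on tuples `(i₁, …, i_d)` (written in natural order):
increment the last coordinate if it is strictly smaller than the previous one, otherwise
zero it and apply the successor to the prefix. -/
def succd (l : List ℕ) : List ℕ := (rsucc l.reverse).reverse

/-- The all-zero tuple `0_d`. -/
def zeroTuple (d : ℕ) : List ℕ := List.replicate d 0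

open Function List
open scoped Nat

theorem _root_.Function.forall_iterate_le_add {α : Type*} {f : α → α} {P : α → Prop} {x : α}
    {a b : ℕ} (ha : ∀ j ≤ a, P (f^[j] x)) (hb : ∀ j ≤ b, P (f^[j] (f^[a] x))) :
    ∀ j ≤ a + b, P (f^[j] x) := by
  intro j hj
  rcases le_total j a with hja | hja
  · exact ha j hja
  · obtain ⟨i, rfl⟩ := Nat.exists_eq_add_of_le hja
    rw [add_comm, iterate_add_apply]
    exact hb i (by omega)

theorem pow_add_factorial_le_ascFactorial (k : ℕ) {d : ℕ} (hd : 1 ≤ d) :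
    k ^ d + d ! ≤ (k + 1).ascFactorial d := by
  rw [Nat.ascFactorial_eq_prod_range, Nat.factorial_eq_prod_range_add_one,
    Finset.pow_eq_prod_const]
  exact Finset.prod_add_prod_le' (i := 0) (Finset.mem_range.mpr hd) (by omega)
    (fun j _ _ => by omega) (fun j _ _ => by omega)

theorem ascFactorial_le_factorial_mul_pow (k d : ℕ) :
    (k + 1).ascFactorial d ≤ d ! * (k + 1) ^ d := by
  rw [Nat.ascFactorial_eq_prod_range, Nat.factorial_eq_prod_range_add_one,
    Finset.pow_eq_prod_const, ← Finset.prod_mul_distrib]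
  exact Finset.prod_le_prod' fun i _ => by nlinarith

theorem choose_add_le_succ_pow (k d : ℕ) : (k + d).choose d ≤ (k + 1) ^ d := by
  have := ascFactorial_le_factorial_mul_pow k d
  rw [Nat.ascFactorial_eq_factorial_mul_choose] at this
  exact Nat.le_of_mul_le_mul_left this (Nat.factorial_pos d)

theorem pow_le_factorial_mul_choose_add_sub_one (k : ℕ) {d : ℕ} (hd : 1 ≤ d) :
    k ^ d ≤ d ! * ((k + d).choose d - 1) := by
  have := pow_add_factorial_le_ascFactorial k hd
  rw [Nat.ascFactorial_eq_factorial_mul_choose] at this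
  rw [Nat.mul_sub_one]
  omega

theorem choose_succ_add_succ_sub_one (k d : ℕ) :
    (k + 1 + (d + 1)).choose (d + 1) - 1
      = ((k + (d + 1)).choose (d + 1) - 1) + 1 + ((k + 1 + d).choose d - 1) := by
  rw [show k + 1 + (d + 1) = k + (d + 1) + 1 by omega, Nat.choose_succ_succ',
    show k + 1 + d = k + (d + 1) by omega]
  have := Nat.choose_pos (show d ≤ k + (d + 1) by omega)
  have := Nat.choose_pos (show d + 1 ≤ k + (d + 1) by omega)
  omega

theorem reverse_rsucc_iterate (n : ℕ) (l : List ℕ) :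
    (rsucc^[n] l).reverse = succd^[n] l.reverse :=
  (show Semiconj reverse rsucc succd from fun l => by simp [succd]).iterate_right n l

theorem rsucc_replicate_append {v : ℕ} {tail : List ℕ} (h : ∀ t ∈ tail.head?, v < t) (d : ℕ) :
    rsucc (replicate (d + 1) v ++ tail) = replicate d 0 ++ (v + 1) :: tail := by
  induction d with
  | zero =>
    cases tail with
    | nil => rfl
    | cons t ts => simp [rsucc, h t rfl]
  | succ d ih =>
    rw [replicate_succ, cons_append, replicate_succ, cons_append, rsucc, if_neg (lt_irrefl v),
      ← cons_append, ← replicate_succ, ih, replicate_succ, cons_append]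

theorem rsucc_iterate_replicate_zero_append (d k : ℕ) {tail : List ℕ}
    (hk : ∀ t ∈ tail.head?, k ≤ t) :
    rsucc^[(k + d).choose d - 1] (replicate d 0 ++ tail) = replicate d k ++ tail ∧
      ∀ j ≤ (k + d).choose d - 1, (rsucc^[j] (replicate d 0 ++ tail)).sum ≤ d * k + tail.sum := by
  induction d generalizing k tail with
  | zero => simp
  | succ d ihd =>
    induction k generalizing tail with
    | zero => simp
    | succ k ihk =>
      obtain ⟨reach₁, bound₁⟩ := ihk fun t ht => (hk t ht).trans' k.le_succ
      obtain ⟨reach₂, bound₂⟩ := ihd (k + 1) (tail := (k + 1) :: tail) fun t ht => by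
        simp_all
      set a := (k + (d + 1)).choose (d + 1) - 1
      have midpoint :
          rsucc^[a + 1] (replicate (d + 1) 0 ++ tail) = replicate d 0 ++ (k + 1) :: tail := by
        rw [iterate_succ_apply', reach₁, rsucc_replicate_append hk d]
      have bound₂' : ∀ j ≤ (k + 1 + d).choose d - 1,
          (rsucc^[j] (replicate d 0 ++ (k + 1) :: tail)).sum ≤ (d + 1) * (k + 1) + tail.sum :=
        fun j hj => (bound₂ j hj).trans_eq (by rw [sum_cons]; ring)
      rw [choose_succ_add_succ_sub_one]
      constructor
      · rw [add_comm, iterate_add_apply, midpoint, reach₂, replicate_succ', append_assoc,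
          singleton_append]
      · refine forall_iterate_le_add (P := fun l : List ℕ => l.sum ≤ (d + 1) * (k + 1) + tail.sum)
          (fun j hj => ?_) (fun j hj => ?_)
        · rcases Nat.le_add_one_iff.mp hj with hj | rfl
          · exact (bound₁ j hj).trans (by gcongr; omega)
          · exact midpoint ▸ bound₂' 0 (Nat.zero_le _)
        · exact midpoint ▸ bound₂' j hj

theorem succd_iterate_zeroTuple (d k : ℕ) :
    succd^[(k + d).choose d - 1] (zeroTuple d) = replicate d k ∧
      ∀ j ≤ (k + d).choose d - 1, (succd^[j] (zeroTuple d)).sum ≤ d * k := by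
  obtain ⟨reach, bound⟩ := rsucc_iterate_replicate_zero_append d k (tail := []) (by simp)
  simp only [append_nil, sum_nil, add_zero] at reach bound
  have hzero : zeroTuple d = (replicate d 0).reverse := by simp [zeroTuple]
  refine ⟨?_, fun j hj => ?_⟩
  · rw [hzero, ← reverse_rsucc_iterate, reach, reverse_replicate]
  · rw [hzero, ← reverse_rsucc_iterate, sum_reverse]
    exact bound j hj

/-- The constant tuple `k_d = (k, …, k)` is reached from `0_d` after `m` steps, where
`k^d ≤ d!·m`, `m ≤ (k+1)^d`, and the maximal ℓ¹-norm along the way equals `d·k`. -/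
theorem reach_constant_tuple (d k : ℕ) (hd : 1 ≤ d) :
    ∃ m : ℕ, succd^[m] (zeroTuple d) = List.replicate d k ∧
      k ^ d ≤ Nat.factorial d * m ∧ m ≤ (k + 1) ^ d ∧
      (Finset.range (m + 1)).sup (fun j => (succd^[j] (zeroTuple d)).sum) = d * k := by
  obtain ⟨reach, bound⟩ := succd_iterate_zeroTuple d k
  refine ⟨(k + d).choose d - 1, reach, pow_le_factorial_mul_choose_add_sub_one k hd,
    (Nat.sub_le _ 1).trans (choose_add_le_succ_pow k d), le_antisymm ?_ ?_⟩
  · exact Finset.sup_le fun j hj => bound j (Nat.lt_succ_iff.mp (Finset.mem_range.mp hj))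
  · refine Finset.le_sup_of_le (Finset.self_mem_range_succ _) ?_
    simp [reach]

end CounterValues
end

section
/- Fix an integer d ≥ 1 and define size_d : ℕ → ℕ by size_d(n) = max over 0 ≤ m ≤ n of |succ_d^[m](0_d)|₁. Then for every n ∈ ℕ: d·n^{1/d} − 2d ≤ size_d(n) and size_d(n) ≤ d·(d!)^{1/d}·n^{1/d} + d, where the powers are real powers with exponent 1/d. (These bounds express that size_d is equivalent to n^{1/d} up to multiplicative constants and constant shifts.) -/
/-!
Read from the last coordinate, `succ_d` lists the multisets `a₀ ≤ a₁ ≤ ⋯ ≤ a_{d-1}` in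
colexicographic order, and the number of steps needed to reach such a tuple from `0_d` is its
rank `∑ₜ (aₜ + t).choose (t + 1)` in the combinatorial number system. So the `m`-th tuple has
largest entry `x` with `(x + d - 1).choose d ≤ m`, whence `|u|₁ ≤ d·x ≤ d·(d!·m)^{1/d}`.
Conversely, the constant tuple `(k, …, k)` has rank `(k + d).choose d - 1 < (k + 1)^d`, so it is
reached within `n` steps as soon as `(k + 1)^d ≤ n + 1`, and has norm `d·k`.
-/

namespace CounterValues

/-- `size_d(n)`: the maximal ℓ¹-norm of `succ_d^[m](0_d)` over `0 ≤ m ≤ n`. -/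
def sized (d n : ℕ) : ℕ :=
  (Finset.range (n + 1)).sup (fun m => (succd^[m] (zeroTuple d)).sum)

open List
open scoped Nat

theorem length_rsucc (l : List ℕ) : (rsucc l).length = l.length := by
  induction l with
  | nil => rfl
  | cons a rest ih =>
    match rest, ih with
    | [], _ => rfl
    | b :: r, ih =>
      rw [rsucc]
      split
      · rfl
      · simpa using ih

theorem pairwise_rsucc {l : List ℕ} (h : l.Pairwise (· ≤ ·)) :
    (rsucc l).Pairwise (· ≤ ·) := by
  induction l with
  | nil => exact h
  | cons a rest ih =>
    match rest, ih, h with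
    | [], _, _ => simp [rsucc]
    | b :: r, ih, h =>
      rw [pairwise_cons] at h
      rw [rsucc]
      split
      · have hbr := pairwise_cons.mp h.2
        refine pairwise_cons.mpr ⟨?_, h.2⟩
        rintro x (_ | ⟨_, hx⟩)
        · omega
        · have := hbr.1 x hx
          omega
      · exact pairwise_cons.mpr ⟨fun x _ => x.zero_le, ih h.2⟩

/-- The combinatorial number system for multisets: a sorted list `a₀ ≤ a₁ ≤ ⋯` gets rank
`∑ t, (aₜ + j + t).choose (j + t + 1)`, the offset `j` being its position in a longer list. -/
def rank : ℕ → List ℕ → ℕ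
  | _, [] => 0
  | j, a :: l => (a + j).choose (j + 1) + rank (j + 1) l

theorem rank_append_singleton (j x : ℕ) (l : List ℕ) :
    rank j (l ++ [x]) = rank j l + (x + j + l.length).choose (j + l.length + 1) := by
  induction l generalizing j with
  | nil => simp [rank]
  | cons a l ih =>
    simp only [cons_append, rank, ih, length_cons]
    rw [show x + (j + 1) + l.length = x + j + (l.length + 1) by omega,
      show j + 1 + l.length + 1 = j + (l.length + 1) + 1 by omega]
    omega

theorem rank_rsucc {a j : ℕ} {l : List ℕ} (h : (a :: l).Pairwise (· ≤ ·)) :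
    rank j (rsucc (a :: l)) = rank j (a :: l) + (a + j).choose j := by
  induction l generalizing a j with
  | nil =>
    simp only [rsucc, rank, Nat.add_right_comm a 1 j, Nat.choose_succ_succ']
    omega
  | cons b r ih =>
    rw [pairwise_cons] at h
    rw [rsucc]
    split
    · simp only [rank, Nat.add_right_comm a 1 j, Nat.choose_succ_succ']
      omega
    · obtain rfl : a = b := le_antisymm (h.1 b mem_cons_self) (by omega)
      simp only [rank, ih h.2, Nat.zero_add, Nat.choose_eq_zero_of_lt (Nat.lt_succ_self j),
        ← Nat.add_assoc, Nat.choose_succ_succ']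
      omega

theorem rank_replicate (j e k : ℕ) :
    rank j (replicate e k) + (k + j).choose j = (k + j + e).choose (j + e) := by
  induction e with
  | zero => simp [rank]
  | succ e ih =>
    rw [replicate_succ', rank_append_singleton, length_replicate, Nat.add_right_comm, ih,
      ← Nat.add_assoc, ← Nat.add_assoc, ← Nat.choose_succ_succ']

theorem rank_replicate_zero (j e : ℕ) : rank j (replicate e 0) = 0 := by
  induction e generalizing j with
  | zero => rfl
  | succ e ih => simp [replicate_succ, rank, ih]

theorem rank_lt_choose {j x : ℕ} {l : List ℕ} (hl : l.Pairwise (· ≤ ·))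
    (hx : ∀ y ∈ l, y ≤ x) :
    rank j l < (x + j + l.length).choose (j + l.length) := by
  induction l using reverseRecOn generalizing x with
  | nil => simpa [rank] using Nat.choose_pos (by omega)
  | append_singleton l y ih =>
    rw [pairwise_append] at hl
    have hy : ∀ z ∈ l, z ≤ y := fun z hz => hl.2.2 z hz y mem_cons_self
    calc rank j (l ++ [y])
        < (y + j + l.length).choose (j + l.length)
          + (y + j + l.length).choose (j + l.length + 1) := by
          rw [rank_append_singleton]; exact Nat.add_lt_add_right (ih hl.1 hy) _
      _ = (y + j + (l ++ [y]).length).choose (j + (l ++ [y]).length) := by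
          simp only [length_append, length_singleton, ← Nat.add_assoc, Nat.choose_succ_succ']
      _ ≤ (x + j + (l ++ [y]).length).choose (j + (l ++ [y]).length) :=
          Nat.choose_le_choose _ (by simp [hx y (by simp)])

theorem rank_append_singleton_lt_of_lt {j x x' : ℕ} {l l' : List ℕ}
    (hl : (l ++ [x]).Pairwise (· ≤ ·)) (hlen : l.length = l'.length) (hx : x < x') :
    rank j (l ++ [x]) < rank j (l' ++ [x']) :=
  calc rank j (l ++ [x])
      < (x + j + (l ++ [x]).length).choose (j + (l ++ [x]).length) :=
        rank_lt_choose hl fun y hy => by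
          rcases mem_append.mp hy with hy | hy
          · exact (pairwise_append.mp hl).2.2 y hy x mem_cons_self
          · exact (mem_singleton.mp hy).le
    _ ≤ (x' + j + l'.length).choose (j + l'.length + 1) := by
        rw [length_append, length_singleton, hlen, ← Nat.add_assoc]
        exact Nat.choose_le_choose _ (by omega)
    _ ≤ rank j (l' ++ [x']) := by
        rw [rank_append_singleton]
        omega

theorem eq_of_rank_eq {j : ℕ} {l l' : List ℕ} (hl : l.Pairwise (· ≤ ·))
    (hl' : l'.Pairwise (· ≤ ·)) (hlen : l.length = l'.length) (h : rank j l = rank j l') :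
    l = l' := by
  induction l using reverseRecOn generalizing l' with
  | nil => exact (length_eq_zero_iff.mp hlen.symm).symm
  | append_singleton l x ih =>
    obtain ⟨l', x', rfl⟩ : ∃ l'' x', l' = l'' ++ [x'] := by
      rcases eq_nil_or_concat' l' with rfl | h'
      · simp at hlen
      · exact h'
    simp only [length_append, length_singleton, Nat.add_right_cancel_iff] at hlen
    obtain rfl : x = x' := by
      by_contra hne
      rcases Nat.lt_or_gt_of_ne hne with hlt | hlt
      · exact (rank_append_singleton_lt_of_lt hl hlen hlt).ne h
      · exact (rank_append_singleton_lt_of_lt hl' hlen.symm hlt).ne h.symm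
    rw [rank_append_singleton, rank_append_singleton, hlen, Nat.add_right_cancel_iff] at h
    rw [ih (pairwise_append.mp hl).1 (pairwise_append.mp hl').1 hlen h]

theorem pairwise_iterate_rsucc {l : List ℕ} (h : l.Pairwise (· ≤ ·)) (m : ℕ) :
    (rsucc^[m] l).Pairwise (· ≤ ·) :=
  Function.Iterate.rec _ h (fun _ => pairwise_rsucc) m

theorem length_iterate_rsucc (l : List ℕ) (m : ℕ) : (rsucc^[m] l).length = l.length :=
  Function.Iterate.rec (fun l' => l'.length = l.length) rfl
    (fun l' h => (length_rsucc l').trans h) m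

theorem rank_iterate_rsucc {l : List ℕ} (hl : l.Pairwise (· ≤ ·)) (hne : l ≠ []) (m : ℕ) :
    rank 0 (rsucc^[m] l) = rank 0 l + m := by
  induction m with
  | zero => rfl
  | succ m ih =>
    obtain ⟨a, r, har⟩ := exists_cons_of_ne_nil (l := rsucc^[m] l) (by
      rw [← length_pos_iff, length_iterate_rsucc]; exact length_pos_iff.mpr hne)
    have hs := pairwise_iterate_rsucc hl m
    rw [har] at hs ih
    rw [Function.iterate_succ_apply', har, rank_rsucc hs, ih, Nat.choose_zero_right,
      Nat.add_assoc]

theorem iterate_rsucc_replicate {d : ℕ} (hd : d ≠ 0) (k : ℕ) :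
    rsucc^[(k + d).choose d - 1] (replicate d 0) = replicate d k := by
  have hk := rank_replicate 0 d k
  simp only [Nat.add_zero, Nat.zero_add, Nat.choose_zero_right] at hk
  refine eq_of_rank_eq (j := 0) (pairwise_iterate_rsucc (by simp) _) (by simp)
    (by rw [length_iterate_rsucc]; simp) ?_
  rw [rank_iterate_rsucc (by simp) (by simpa using hd), rank_replicate_zero]
  omega

theorem pow_succ_le_factorial_mul_choose (x k : ℕ) :
    x ^ (k + 1) ≤ (k + 1)! * (x + k).choose (k + 1) := by
  rw [← Nat.descFactorial_eq_factorial_mul_choose]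
  simpa using Nat.pow_sub_le_descFactorial (x + k) (k + 1)

theorem sum_pow_le_of_pairwise {l : List ℕ} (hl : l.Pairwise (· ≤ ·)) (hne : l ≠ []) :
    l.sum ^ l.length ≤ l.length ^ l.length * l.length ! * rank 0 l := by
  obtain ⟨l, x, rfl⟩ := eq_nil_or_concat' l |>.resolve_left hne
  have hx : ∀ y ∈ l, y ≤ x := fun y hy => (pairwise_append.mp hl).2.2 y hy x mem_cons_self
  have hsum : (l ++ [x]).sum ≤ (l.length + 1) * x := by
    rw [sum_append, sum_singleton, Nat.succ_mul]
    simpa using Nat.add_le_add_right (sum_le_card_nsmul l x hx) x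
  have hrank : (x + l.length).choose (l.length + 1) ≤ rank 0 (l ++ [x]) := by
    simp [rank_append_singleton]
  rw [length_append, length_singleton]
  calc (l ++ [x]).sum ^ (l.length + 1)
      ≤ ((l.length + 1) * x) ^ (l.length + 1) := Nat.pow_le_pow_left hsum _
    _ = (l.length + 1) ^ (l.length + 1) * x ^ (l.length + 1) := Nat.mul_pow _ _ _
    _ ≤ (l.length + 1) ^ (l.length + 1) * ((l.length + 1)! * rank 0 (l ++ [x])) :=
        Nat.mul_le_mul_left _ ((pow_succ_le_factorial_mul_choose x _).trans
          (Nat.mul_le_mul_left _ hrank))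
    _ = _ := (Nat.mul_assoc _ _ _).symm

theorem sum_iterate_succd (d m : ℕ) :
    (succd^[m] (zeroTuple d)).sum = (rsucc^[m] (replicate d 0)).sum := by
  have hconj : Function.Semiconj reverse rsucc succd := fun l => by
    simp only [succd, reverse_reverse]
  rw [zeroTuple, ← reverse_replicate, ← (hconj.iterate_right m).eq, sum_reverse,
    reverse_replicate]

theorem sum_iterate_rsucc_le_sized {d m n : ℕ} (hm : m ≤ n) :
    (rsucc^[m] (replicate d 0)).sum ≤ sized d n := by
  rw [← sum_iterate_succd]
  exact Finset.le_sup (f := fun m => (succd^[m] (zeroTuple d)).sum)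
    (Finset.mem_range.mpr (Nat.lt_succ_of_le hm))

theorem exists_sized_eq (d n : ℕ) : ∃ m ≤ n, sized d n = (rsucc^[m] (replicate d 0)).sum := by
  obtain ⟨m, hm, h⟩ := Finset.exists_mem_eq_sup (Finset.range (n + 1))
    Finset.nonempty_range_add_one (fun m => (succd^[m] (zeroTuple d)).sum)
  exact ⟨m, Nat.le_of_lt_succ (Finset.mem_range.mp hm), by rw [sized, h, sum_iterate_succd]⟩

theorem mul_le_sized {d k n : ℕ} (hd : d ≠ 0) (hk : (k + 1) ^ d ≤ n + 1) :
    d * k ≤ sized d n := by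
  have hm : (k + d).choose d - 1 ≤ n := by
    have := Nat.choose_add_le_add_one_pow k d
    omega
  simpa [iterate_rsucc_replicate hd] using sum_iterate_rsucc_le_sized (d := d) hm

theorem sized_pow_le {d : ℕ} (hd : d ≠ 0) (n : ℕ) : sized d n ^ d ≤ d ^ d * d ! * n := by
  obtain ⟨m, hm, h⟩ := exists_sized_eq d n
  have hl : (replicate d 0).Pairwise (· ≤ ·) := by simp
  have := sum_pow_le_of_pairwise (pairwise_iterate_rsucc hl m)
    (ne_nil_of_length_pos (by rw [length_iterate_rsucc, length_replicate]; omega))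
  rw [length_iterate_rsucc, rank_iterate_rsucc hl (by simpa using hd), length_replicate,
    rank_replicate_zero, Nat.zero_add] at this
  rw [h]
  exact this.trans (Nat.mul_le_mul_left _ hm)

theorem exists_succ_pow_le_and_rpow_inv_le {d : ℕ} (hd : d ≠ 0) (n : ℕ) :
    ∃ k : ℕ, (k + 1) ^ d ≤ n + 1 ∧ (n : ℝ) ^ (d : ℝ)⁻¹ ≤ k + 2 := by
  have hdpos : (0 : ℝ) < d := by positivity
  set r := ((n : ℝ) + 1) ^ (d : ℝ)⁻¹
  have hr : 1 ≤ r := Real.one_le_rpow (by linarith [n.cast_nonneg (α := ℝ)]) (by positivity)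
  obtain ⟨k, hk⟩ : ∃ k, ⌊r⌋₊ = k + 1 :=
    Nat.exists_eq_add_one_of_ne_zero (Nat.one_le_iff_ne_zero.mp ((Nat.one_le_floor_iff r).mpr hr))
  refine ⟨k, ?_, ?_⟩
  · have hfloor : ((k + 1 : ℕ) : ℝ) ≤ r := hk ▸ Nat.floor_le (by positivity)
    have := (Real.le_rpow_inv_iff_of_pos (by positivity) (by positivity) hdpos).mp hfloor
    exact_mod_cast (Real.rpow_natCast _ d).symm.trans_le this
  · have hceil := Nat.lt_floor_add_one r
    rw [hk] at hceil
    push_cast at hceil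
    calc (n : ℝ) ^ (d : ℝ)⁻¹ ≤ r :=
          Real.rpow_le_rpow (by positivity) (by linarith) (by positivity)
      _ ≤ k + 2 := by linarith

theorem le_mul_rpow_inv_of_pow_le {x a : ℝ} {d : ℕ} (hx : 0 ≤ x) (ha : 0 ≤ a) (hd : d ≠ 0)
    (h : x ^ d ≤ d ^ d * a) : x ≤ d * a ^ (d : ℝ)⁻¹ := by
  have hdpos : (0 : ℝ) < d := by positivity
  rw [← Real.rpow_natCast] at h
  calc x ≤ ((d : ℝ) ^ d * a) ^ (d : ℝ)⁻¹ :=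
        (Real.le_rpow_inv_iff_of_pos hx (by positivity) hdpos).mpr h
    _ = d * a ^ (d : ℝ)⁻¹ := by
        rw [Real.mul_rpow (by positivity) ha, Real.pow_rpow_inv_natCast hdpos.le hd]

/-- `size_d` is equivalent to `n^{1/d}`:
`d·n^{1/d} − 2d ≤ size_d(n) ≤ d·(d!)^{1/d}·n^{1/d} + d`. -/
theorem sized_bounds (d : ℕ) (hd : 1 ≤ d) (n : ℕ) :
    (d : ℝ) * (n : ℝ) ^ ((1 : ℝ) / (d : ℝ)) - 2 * (d : ℝ) ≤ (sized d n : ℝ) ∧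
    (sized d n : ℝ) ≤
      (d : ℝ) * (Nat.factorial d : ℝ) ^ ((1 : ℝ) / (d : ℝ)) * (n : ℝ) ^ ((1 : ℝ) / (d : ℝ))
        + (d : ℝ) := by
  have hd0 : d ≠ 0 := Nat.one_le_iff_ne_zero.mp hd
  rw [one_div]
  constructor
  · obtain ⟨k, hpow, hroot⟩ := exists_succ_pow_le_and_rpow_inv_le hd0 n
    calc (d : ℝ) * (n : ℝ) ^ (d : ℝ)⁻¹ - 2 * d ≤ d * (k + 2) - 2 * d := by gcongr
      _ = ((d * k : ℕ) : ℝ) := by push_cast; ring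
      _ ≤ sized d n := by exact_mod_cast mul_le_sized hd0 hpow
  · have hS : (sized d n : ℝ) ^ d ≤ (d : ℝ) ^ d * (d ! * n) := by
      rw [← mul_assoc]
      exact_mod_cast sized_pow_le hd0 n
    calc (sized d n : ℝ) ≤ d * ((d ! : ℝ) * n) ^ (d : ℝ)⁻¹ :=
          le_mul_rpow_inv_of_pow_le (by positivity) (by positivity) hd0 hS
      _ = d * (d ! : ℝ) ^ (d : ℝ)⁻¹ * (n : ℝ) ^ (d : ℝ)⁻¹ := by
          rw [Real.mul_rpow (by positivity) (by positivity), mul_assoc]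
      _ ≤ _ := le_add_of_nonneg_right (by positivity)

end CounterValues
end
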